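/- Let M be a Hilbert C*-module over A = ℂ^{m×m}, let {q_t}_{t∈T} be an orthonormal system in M, and let V be the closed submodule generated by {q_t}. Then for every v ∈ M the net Σ_{t∈T₀} q_t⟨q_t,v⟩ over finite subsets T₀ ⊆ T converges in norm to an element Pv ∈ V, and v − Pv is orthogonal to V; hence M = V + V^⊥. -/

import Mathlib

/-!
The terms `g_t = q_t⟨q_t,v⟩` are mutually orthogonal, and `v - S_F ⊥ S_F` for the partial sums
`S_F = Σ_{t ∈ F} g_t`, because `⟨q_t,q_t⟩⟨q_t,v⟩ = ⟨q_t,v⟩` when `⟨q_t,q_t⟩` is idempotent.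
Pythagoras gives Bessel's inequality `Σ_{t ∈ F} ⟨g_t,g_t⟩ ≤ ⟨v,v⟩`. Taking traces turns this into
a convergent series of nonnegative reals which, since `‖A‖ ≤ tr A` for positive matrices,
dominates `‖S_F‖²`; so the partial sums are Cauchy. Orthogonality of `v - Pv` to each `q_t` passes
to the closed span by the C⋆-module Cauchy–Schwarz inequality `‖⟨u,w⟩‖ ≤ ‖u‖‖w‖`.
-/

open scoped Matrix.Norms.L2Operator ComplexOrder

/-- A Hilbert C*-module over the C*-algebra `ℂ^{m×m}` of `m × m` complex matrices (with the
operator norm): a right module with a matrix-valued inner product inducing the norm of `M`. -/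
structure HilbertModuleMat (m : ℕ) (M : Type*) [NormedAddCommGroup M] where
  smul : M → Matrix (Fin m) (Fin m) ℂ → M
  inner : M → M → Matrix (Fin m) (Fin m) ℂ
  smul_add_vec : ∀ (u v : M) c, smul (u + v) c = smul u c + smul v c
  smul_add_alg : ∀ (u : M) c d, smul u (c + d) = smul u c + smul u d
  smul_mul : ∀ (u : M) c d, smul u (c * d) = smul (smul u c) d
  smul_one : ∀ u : M, smul u 1 = u
  inner_add_right : ∀ u v w : M, inner u (v + w) = inner u v + inner u w
  inner_smul_right : ∀ (u v : M) c, inner u (smul v c) = inner u v * c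
  inner_conj : ∀ u v : M, inner v u = star (inner u v)
  inner_self_posSemidef : ∀ u : M, (inner u u).PosSemidef
  inner_definite : ∀ u : M, inner u u = 0 → u = 0
  norm_eq : ∀ u : M, ‖u‖ = Real.sqrt ‖inner u u‖

/-- A vector `q` is *normalized* if `⟨q,q⟩` is a nonzero idempotent. -/
def HilbertModuleMat.Normalized {m : ℕ} {M : Type*} [NormedAddCommGroup M]
    (h : HilbertModuleMat m M) (q : M) : Prop :=
  h.inner q q ≠ 0 ∧ h.inner q q * h.inner q q = h.inner q q

/-- The closure of the `ℂ^{m×m}`-submodule spanned by a family `q : T → M`. -/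
def spanClosureMat {m : ℕ} {M : Type*} [NormedAddCommGroup M] (h : HilbertModuleMat m M)
    {T : Type*} (q : T → M) : Set M :=
  closure {v : M | ∃ (s : Finset T) (c : T → Matrix (Fin m) (Fin m) ℂ),
    v = ∑ t ∈ s, h.smul (q t) (c t)}

theorem Matrix.PosSemidef.norm_le_re_trace {n : Type*} [Fintype n] [DecidableEq n]
    {A : Matrix n n ℂ} (hA : A.PosSemidef) : ‖A‖ ≤ A.trace.re := by
  have hnorm : ‖A‖ = ‖(RCLike.ofReal ∘ hA.1.eigenvalues : n → ℂ)‖ := by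
    conv_lhs => rw [hA.1.spectral_theorem]
    rw [Unitary.conjStarAlgAut_apply, ← Unitary.coe_star, CStarRing.norm_mul_coe_unitary,
      CStarRing.norm_coe_unitary_mul, l2_opNorm_diagonal]
  have hsum : A.trace.re = ∑ i, hA.1.eigenvalues i := by
    simp [hA.1.trace_eq_sum_eigenvalues]
  rw [hnorm, hsum]
  refine pi_norm_le_iff_of_nonneg (Finset.sum_nonneg fun i _ => hA.eigenvalues_nonneg i) |>.2
    fun i => ?_
  rw [Function.comp_apply, RCLike.norm_ofReal, abs_of_nonneg (hA.eigenvalues_nonneg i)]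
  exact Finset.single_le_sum (fun j _ => hA.eigenvalues_nonneg j) (Finset.mem_univ i)

namespace HilbertModuleMat

variable {m : ℕ} {M : Type*} [NormedAddCommGroup M] (h : HilbertModuleMat m M)

def innerAddMonoidHom (u : M) : M →+ Matrix (Fin m) (Fin m) ℂ :=
  AddMonoidHom.mk' (h.inner u) (h.inner_add_right u)

lemma inner_sub_right (u x y : M) : h.inner u (x - y) = h.inner u x - h.inner u y :=
  map_sub (h.innerAddMonoidHom u) x y

lemma inner_sum_right {ι : Type*} (u : M) (s : Finset ι) (f : ι → M) :
    h.inner u (∑ i ∈ s, f i) = ∑ i ∈ s, h.inner u (f i) :=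
  map_sum (h.innerAddMonoidHom u) f s

lemma inner_add_left (x y u : M) : h.inner (x + y) u = h.inner x u + h.inner y u := by
  rw [h.inner_conj u, h.inner_add_right, star_add, ← h.inner_conj, ← h.inner_conj]

lemma inner_sum_left {ι : Type*} (u : M) (s : Finset ι) (f : ι → M) :
    h.inner (∑ i ∈ s, f i) u = ∑ i ∈ s, h.inner (f i) u := by
  rw [h.inner_conj u, h.inner_sum_right, star_sum]
  simp only [← h.inner_conj]

lemma inner_sub_left (x y u : M) : h.inner (x - y) u = h.inner x u - h.inner y u := by
  rw [h.inner_conj u, h.inner_sub_right, star_sub, ← h.inner_conj, ← h.inner_conj]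

lemma inner_smul_left (x u : M) (c : Matrix (Fin m) (Fin m) ℂ) :
    h.inner (h.smul x c) u = star c * h.inner x u := by
  rw [h.inner_conj u, h.inner_smul_right, star_mul, ← h.inner_conj]

lemma smul_zero_vec (c : Matrix (Fin m) (Fin m) ℂ) : h.smul 0 c = 0 := by
  simpa using h.smul_add_vec 0 0 c

lemma smul_zero_alg (u : M) : h.smul u 0 = 0 := by
  simpa using h.smul_add_alg u 0 0

/-- Mathlib's `CStarModule` is written for a left action `a • x` with an inner product that is
linear in its second slot, `⟪x, a • y⟫ = a * ⟪x, y⟫`; a right Hilbert module is fed to it as its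
mirror image `⟪x, y⟫ := ⟨y, x⟩`, `a • x := x · a*`, `z • x := x · (z̄ 1)`. -/
@[reducible] def mirrorComplexModule : Module ℂ M where
  smul z u := h.smul u (starRingEnd ℂ z • 1)
  one_smul u := by
    change h.smul u _ = u
    rw [map_one, one_smul, h.smul_one]
  mul_smul z w u := by
    change h.smul u _ = h.smul (h.smul u _) _
    rw [← h.smul_mul, smul_mul_smul_comm, one_mul, map_mul, mul_comm]
  smul_zero z := h.smul_zero_vec _
  smul_add z u v := h.smul_add_vec u v _
  add_smul z w u := by
    change h.smul u _ = h.smul u _ + h.smul u _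
    rw [map_add, add_smul, h.smul_add_alg]
  zero_smul u := by
    change h.smul u _ = 0
    rw [map_zero, zero_smul, h.smul_zero_alg]

@[reducible] def mirrorSMul : SMul (Matrix (Fin m) (Fin m) ℂ) M where
  smul a u := h.smul u (star a)

open scoped MatrixOrder in
@[reducible] def mirrorCStarModule :
    letI := h.mirrorComplexModule
    letI := h.mirrorSMul
    CStarModule (Matrix (Fin m) (Fin m) ℂ) M :=
  letI := h.mirrorComplexModule
  letI := h.mirrorSMul
  { inner := fun x y => h.inner y x
    inner_add_right := h.inner_add_left _ _ _
    inner_self_nonneg := (h.inner_self_posSemidef _).nonneg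
    inner_self := ⟨h.inner_definite _, fun hx => by
      rw [hx, ← h.smul_zero_vec 0, h.inner_smul_right, mul_zero]⟩
    inner_op_smul_right := by
      intro a x y
      change h.inner (h.smul y (star a)) x = _
      rw [h.inner_smul_left, star_star]
    inner_smul_right_complex := by
      intro z x y
      change h.inner (h.smul y _) x = _
      rw [h.inner_smul_left, star_smul, star_one, RCLike.star_def, Complex.conj_conj,
        smul_mul_assoc, one_mul]
    star_inner := fun x y => (h.inner_conj y x).symm
    norm_eq_sqrt_norm_inner_self := h.norm_eq }

open scoped MatrixOrder in
theorem norm_inner_le (u w : M) : ‖h.inner u w‖ ≤ ‖u‖ * ‖w‖ :=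
  letI := h.mirrorComplexModule
  letI := h.mirrorSMul
  letI := h.mirrorCStarModule
  (CStarModule.norm_inner_le (A := Matrix (Fin m) (Fin m) ℂ) M (x := w) (y := u)).trans_eq
    (mul_comm _ _)

theorem continuous_inner_right (u : M) : Continuous (h.inner u) :=
  AddMonoidHomClass.continuous_of_bound (h.innerAddMonoidHom u) ‖u‖ (h.norm_inner_le u)

lemma norm_sq_le_re_trace_inner_self (u : M) : ‖u‖ ^ 2 ≤ (h.inner u u).trace.re := by
  rw [h.norm_eq, Real.sq_sqrt (norm_nonneg _)]
  exact (h.inner_self_posSemidef u).norm_le_re_trace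

lemma re_trace_inner_self_nonneg (u : M) : 0 ≤ (h.inner u u).trace.re :=
  (norm_nonneg _).trans (h.inner_self_posSemidef u).norm_le_re_trace

lemma inner_add_self_of_inner_eq_zero {x y : M} (hxy : h.inner x y = 0) :
    h.inner (x + y) (x + y) = h.inner x x + h.inner y y := by
  rw [h.inner_add_left, h.inner_add_right, h.inner_add_right, h.inner_conj x y, hxy, star_zero,
    add_zero, zero_add]

lemma inner_sum_self_of_pairwise_inner_eq_zero {ι : Type*} {g : ι → M}
    (hg : Pairwise fun i j => h.inner (g i) (g j) = 0) (s : Finset ι) :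
    h.inner (∑ i ∈ s, g i) (∑ i ∈ s, g i) = ∑ i ∈ s, h.inner (g i) (g i) := by
  rw [h.inner_sum_left]
  refine Finset.sum_congr rfl fun i hi => ?_
  rw [h.inner_sum_right, Finset.sum_eq_single i (fun j _ hji => hg hji.symm) (absurd hi)]

theorem summable_of_pairwise_inner_eq_zero [CompleteSpace M] {ι : Type*} {g : ι → M}
    (hg : Pairwise fun i j => h.inner (g i) (g j) = 0)
    (hs : Summable fun i => (h.inner (g i) (g i)).trace.re) : Summable g := by
  refine summable_iff_vanishing_norm.2 fun ε hε => ?_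
  obtain ⟨s, hs⟩ := summable_iff_vanishing_norm.1 hs (ε ^ 2) (by positivity)
  refine ⟨s, fun F hF => lt_of_pow_lt_pow_left₀ 2 hε.le ?_⟩
  calc ‖∑ i ∈ F, g i‖ ^ 2 ≤ (h.inner (∑ i ∈ F, g i) (∑ i ∈ F, g i)).trace.re :=
        h.norm_sq_le_re_trace_inner_self _
    _ = ∑ i ∈ F, (h.inner (g i) (g i)).trace.re := by
        rw [h.inner_sum_self_of_pairwise_inner_eq_zero hg, Matrix.trace_sum, Complex.re_sum]
    _ ≤ ‖∑ i ∈ F, (h.inner (g i) (g i)).trace.re‖ := Real.le_norm_self _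
    _ < ε ^ 2 := hs F hF

lemma smul_inner_self_of_isIdempotentElem {x : M} (hx : IsIdempotentElem (h.inner x x)) :
    h.smul x (h.inner x x) = x := by
  have hstar : star (h.inner x x) = h.inner x x := (h.inner_conj x x).symm
  have hzero : h.inner (x - h.smul x (h.inner x x)) (x - h.smul x (h.inner x x)) = 0 := by
    simp only [h.inner_sub_left, h.inner_sub_right, h.inner_smul_left, h.inner_smul_right, hstar,
      hx.eq, sub_self]
  exact (sub_eq_zero.1 (h.inner_definite _ hzero)).symm

lemma inner_self_mul_inner_of_isIdempotentElem {x : M} (hx : IsIdempotentElem (h.inner x x))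
    (v : M) : h.inner x x * h.inner x v = h.inner x v := by
  conv_rhs => rw [← h.smul_inner_self_of_isIdempotentElem hx]
  rw [h.inner_smul_left, ← h.inner_conj x x]

variable {T : Type*} {q : T → M}

lemma pairwise_inner_smul_eq_zero (horth : Pairwise fun s t => h.inner (q s) (q t) = 0)
    (c : T → Matrix (Fin m) (Fin m) ℂ) :
    Pairwise fun s t => h.inner (h.smul (q s) (c s)) (h.smul (q t) (c t)) = 0 :=
  fun s t hst => by
    dsimp only
    rw [h.inner_smul_left, h.inner_smul_right, horth hst, zero_mul, mul_zero]

lemma inner_smul_inner_eq_single [DecidableEq T]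
    (horth : Pairwise fun s t => h.inner (q s) (q t) = 0)
    (hidem : ∀ t, IsIdempotentElem (h.inner (q t) (q t))) (v : M) (t : T) :
    (fun s => h.inner (q t) (h.smul (q s) (h.inner (q s) v))) = Pi.single t (h.inner (q t) v) := by
  funext s
  rw [h.inner_smul_right]
  rcases eq_or_ne s t with rfl | hst
  · rw [Pi.single_eq_same, h.inner_self_mul_inner_of_isIdempotentElem (hidem s)]
  · rw [Pi.single_eq_of_ne hst, horth hst.symm, zero_mul]

lemma inner_sub_sum_smul_inner_of_mem (horth : Pairwise fun s t => h.inner (q s) (q t) = 0)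
    (hidem : ∀ t, IsIdempotentElem (h.inner (q t) (q t))) (v : M) {F : Finset T} {t : T}
    (ht : t ∈ F) : h.inner (q t) (v - ∑ s ∈ F, h.smul (q s) (h.inner (q s) v)) = 0 := by
  classical
  rw [h.inner_sub_right, h.inner_sum_right, h.inner_smul_inner_eq_single horth hidem,
    Finset.sum_pi_single', if_pos ht, sub_self]

theorem sum_re_trace_inner_self_le (horth : Pairwise fun s t => h.inner (q s) (q t) = 0)
    (hidem : ∀ t, IsIdempotentElem (h.inner (q t) (q t))) (v : M) (F : Finset T) :
    ∑ t ∈ F, (h.inner (h.smul (q t) (h.inner (q t) v)) (h.smul (q t) (h.inner (q t) v))).trace.re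
      ≤ (h.inner v v).trace.re := by
  set S := ∑ t ∈ F, h.smul (q t) (h.inner (q t) v)
  have hS : h.inner S (v - S) = 0 := by
    rw [h.inner_sum_left]
    refine Finset.sum_eq_zero fun t ht => ?_
    rw [h.inner_smul_left, h.inner_sub_sum_smul_inner_of_mem horth hidem v ht, mul_zero]
  have hv : h.inner v v = h.inner S S + h.inner (v - S) (v - S) := by
    rw [← h.inner_add_self_of_inner_eq_zero hS, add_sub_cancel]
  calc _ = (h.inner S S).trace.re := by
        rw [h.inner_sum_self_of_pairwise_inner_eq_zero (h.pairwise_inner_smul_eq_zero horth _),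
          Matrix.trace_sum, Complex.re_sum]
    _ ≤ (h.inner S S).trace.re + (h.inner (v - S) (v - S)).trace.re :=
        le_add_of_nonneg_right (h.re_trace_inner_self_nonneg _)
    _ = (h.inner v v).trace.re := by rw [hv, Matrix.trace_add, Complex.add_re]

theorem summable_smul_inner [CompleteSpace M]
    (horth : Pairwise fun s t => h.inner (q s) (q t) = 0)
    (hidem : ∀ t, IsIdempotentElem (h.inner (q t) (q t))) (v : M) :
    Summable fun t => h.smul (q t) (h.inner (q t) v) :=
  h.summable_of_pairwise_inner_eq_zero (h.pairwise_inner_smul_eq_zero horth _)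
    (summable_of_sum_le (fun _ => h.re_trace_inner_self_nonneg _)
      (h.sum_re_trace_inner_self_le horth hidem v))

theorem inner_sub_tsum_smul_inner_eq_zero [CompleteSpace M]
    (horth : Pairwise fun s t => h.inner (q s) (q t) = 0)
    (hidem : ∀ t, IsIdempotentElem (h.inner (q t) (q t))) (v : M) (t : T) :
    h.inner (v - ∑' s, h.smul (q s) (h.inner (q s) v)) (q t) = 0 := by
  classical
  have hmap : HasSum (fun s => h.inner (q t) (h.smul (q s) (h.inner (q s) v)))
      (h.inner (q t) (∑' s, h.smul (q s) (h.inner (q s) v))) :=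
    (h.summable_smul_inner horth hidem v).hasSum.map (h.innerAddMonoidHom (q t))
      (h.continuous_inner_right (q t))
  rw [h.inner_smul_inner_eq_single horth hidem] at hmap
  rw [h.inner_sub_left, h.inner_conj (q t), h.inner_conj (q t),
    ← hmap.unique (hasSum_pi_single _ _), sub_self]

lemma mem_spanClosureMat_of_hasSum {c : T → Matrix (Fin m) (Fin m) ℂ} {x : M}
    (hx : HasSum (fun t => h.smul (q t) (c t)) x) : x ∈ spanClosureMat h q :=
  mem_closure_of_tendsto hx (Filter.Eventually.of_forall fun F => ⟨F, c, rfl⟩)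

lemma inner_eq_zero_of_mem_spanClosureMat {u w : M} (hu : ∀ t, h.inner u (q t) = 0)
    (hw : w ∈ spanClosureMat h q) : h.inner u w = 0 := by
  refine closure_minimal ?_ (isClosed_eq (h.continuous_inner_right u) continuous_const) hw
  rintro _ ⟨F, c, rfl⟩
  simp only [Set.mem_ofPred_eq, h.inner_sum_right, h.inner_smul_right, hu, zero_mul,
    Finset.sum_const_zero]

end HilbertModuleMat

/-- Over `ℂ^{m×m}`, for every `v` the net of finite partial sums `Σ q_t⟨q_t,v⟩` converges to
some `Pv` in the closed span `V` of the orthonormal system, and `v − Pv ⊥ V`; hence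
`M = V + V^⊥`. -/
theorem projection_exists_and_orthogonal_complement
    {m : ℕ} {M : Type*} [NormedAddCommGroup M] [CompleteSpace M]
    (h : HilbertModuleMat m M)
    {T : Type*} (q : T → M)
    (horth : ∀ s t, s ≠ t → h.inner (q s) (q t) = 0)
    (hnorm : ∀ t, h.Normalized (q t)) :
    ∀ v : M, ∃ Pv : M,
      Pv ∈ spanClosureMat h q ∧
      HasSum (fun t => h.smul (q t) (h.inner (q t) v)) Pv ∧
      (∀ w ∈ spanClosureMat h q, h.inner (v - Pv) w = 0) := by
  intro v
  have hidem : ∀ t, IsIdempotentElem (h.inner (q t) (q t)) := fun t => (hnorm t).2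
  have hsum := (h.summable_smul_inner horth hidem v).hasSum
  exact ⟨_, h.mem_spanClosureMat_of_hasSum hsum, hsum, fun w =>
    h.inner_eq_zero_of_mem_spanClosureMat (h.inner_sub_tsum_smul_inner_eq_zero horth hidem v)⟩
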